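/- Patterns in Moran self-affine sets: Let M ∈ ℕ and ℓ ∈ ℕ₀. There exists U ∈ ℕ with U ≥ 2 such that every F ∈ RCD(U,U+ℓ) contains a homothetic copy of every set with at most M elements; that is, for every non-empty finite set C ⊆ ℝ² with at most M elements there exist λ > 0 and x ∈ ℝ² with λC + x ⊆ F. -/

import Mathlib

/-- The axis-parallel closed box `A^t(B[0,r]) + y`, where `A` is the diagonal matrix with
diagonal entries `β j`. -/
def gameBox {n : ℕ} (β : Fin n → ℝ) (t r : ℝ) (y : Fin n → ℝ) : Set (Fin n → ℝ) :=
  {x | ∀ j, |x j - y j| ≤ β j ^ t * r}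

/-- The diagonal entries `(U⁻¹, V⁻¹)` of the matrix `A_{U,V}`. -/
noncomputable def AUV (U V : ℕ) : Fin 2 → ℝ := ![((U : ℝ))⁻¹, ((V : ℝ))⁻¹]

/-- `F` belongs to the Moran family `𝒞𝒟(U, V)`.  Level-`k` component rectangles are indexed
by words `ω` of length `k` over the alphabet `Fin (U-1) × Fin (V-1)` (the letter `(s, t)`
selecting the region in column `s + 1` and row `t + 1` of the parent rectangle); the rectangle
with index `ω` is `A_{U,V}^k(B[0,1]) + ctr ω`, a rectangle of width `2U^{-k}` and height
`2V^{-k}`.  The centre `ctr (ω ++ [i])` is obtained from `ctr ω` by translating to the centre of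
the selected region and then to one of its four corners, according to the choice function
`corner`; `F` is the intersection over `k` of the unions of the level-`k` rectangles. -/
def RCD (U V : ℕ) (F : Set (Fin 2 → ℝ)) : Prop :=
  ∃ (corner : List (Fin (U - 1) × Fin (V - 1)) → (Fin (U - 1) × Fin (V - 1)) → Bool × Bool)
    (ctr : List (Fin (U - 1) × Fin (V - 1)) → (Fin 2 → ℝ)),
    ctr [] = 0 ∧
    (∀ (ω : List (Fin (U - 1) × Fin (V - 1))) (i : Fin (U - 1) × Fin (V - 1)),
      (ctr (ω ++ [i]) 0 =
        ctr ω 0 + (2 * ((i.1 : ℕ) + 1 : ℝ) - U) / ((U : ℝ) ^ ω.length * ((U : ℝ) - 1))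
          + (if (corner ω i).1 then (-1 : ℝ) else 1) /
              ((U : ℝ) ^ (ω.length + 1) * ((U : ℝ) - 1))) ∧
      (ctr (ω ++ [i]) 1 =
        ctr ω 1 + (2 * ((i.2 : ℕ) + 1 : ℝ) - V) / ((V : ℝ) ^ ω.length * ((V : ℝ) - 1))
          + (if (corner ω i).2 then (-1 : ℝ) else 1) /
              ((V : ℝ) ^ (ω.length + 1) * ((V : ℝ) - 1)))) ∧
    F = ⋂ (k : ℕ),
      ⋃ ω ∈ {ω : List (Fin (U - 1) × Fin (V - 1)) | ω.length = k},
        gameBox (AUV U V) (k : ℝ) 1 (ctr ω)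



namespace MoranAux

lemma nat_eq_of_mul_close {s s' : ℕ} {w : ℝ} (hw : 0 < w)
    (h : |(s : ℝ) * w - (s' : ℝ) * w| < w) : s = s' := by
  have h1 : |(s : ℝ) - (s' : ℝ)| * w < w := by
    rw [← abs_of_pos hw, ← abs_mul]
    have : ((s : ℝ) - (s' : ℝ)) * w = (s : ℝ) * w - (s' : ℝ) * w := by ring
    rw [this]
    simpa [abs_of_pos hw] using h
  have h2 : |(s : ℝ) - (s' : ℝ)| < 1 := by
    by_contra hc
    push_neg at hc
    nlinarith [abs_nonneg ((s : ℝ) - (s' : ℝ))]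
  rw [abs_sub_lt_iff] at h2
  have hs : (s : ℝ) < (s' : ℝ) + 1 := by linarith
  have hs' : (s' : ℝ) < (s : ℝ) + 1 := by linarith
  have h3 : s < s' + 1 := by exact_mod_cast hs
  have h4 : s' < s + 1 := by exact_mod_cast hs'
  omega

lemma cell_select (K : ℕ) (w wq β : ℝ) (hw : 0 < w) (hwq : 0 < wq)
    (hβ0 : 0 ≤ β) (hβ1 : β + wq ≤ (K : ℝ) * w)
    (good : ∀ s : ℕ, ¬((s : ℝ) * w - 2 * wq ≤ β ∧ β ≤ (s : ℝ) * w + wq)) :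
    ∃ s : ℕ, s + 1 ≤ K ∧ (s : ℝ) * w + wq ≤ β ∧ β + wq ≤ ((s : ℝ) + 1) * w - wq := by
  set s := Nat.floor (β / w) with hsdef
  have hdiv : 0 ≤ β / w := div_nonneg hβ0 hw.le
  have h1 : (s : ℝ) * w ≤ β := by
    have h := Nat.floor_le hdiv
    have := mul_le_mul_of_nonneg_right h hw.le
    rwa [div_mul_cancel₀ β hw.ne'] at this
  have h2 : β < ((s : ℝ) + 1) * w := by
    have h := Nat.lt_floor_add_one (β / w)
    have := mul_lt_mul_of_pos_right h hw
    rwa [div_mul_cancel₀ β hw.ne'] at this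
  have hg1 : (s : ℝ) * w + wq < β := by
    have g1 := good s
    by_contra hc
    push_neg at hc
    exact g1 ⟨by linarith, by linarith⟩
  have hg2 : β < ((s : ℝ) + 1) * w - 2 * wq := by
    have g2 := good (s + 1)
    push_cast at g2
    by_contra hc
    push_neg at hc
    exact g2 ⟨by linarith, by linarith⟩
  have hsK : s + 1 ≤ K := by
    by_contra hc
    push_neg at hc
    have hKs : K ≤ s := by omega
    have : (K : ℝ) ≤ (s : ℝ) := by exact_mod_cast hKs
    nlinarith
  exact ⟨s, hsK, by linarith, by linarith⟩

lemma good_select {ι : Type*} [Fintype ι] (m : ℕ) (hm : Fintype.card ι = m) (hm1 : 1 ≤ m)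
    (w wq : ℝ) (hwq : 0 < wq) (hspan : (8 * (m : ℝ) + 1) * wq ≤ w) (α : ι → ℝ) :
    ∃ j : ℕ, (j : ℝ) ≤ 2 * (m : ℝ) ∧ ∀ i (s : ℕ),
      ¬((s : ℝ) * w - 2 * wq ≤ α i + 4 * wq * (j : ℝ) ∧
        α i + 4 * wq * (j : ℝ) ≤ (s : ℝ) * w + wq) := by
  have hw : 0 < w := lt_of_lt_of_le (by positivity) hspan
  by_contra hcon
  push_neg at hcon
  have hsel : ∀ j : Fin (2 * m + 1), ∃ i, ∃ s : ℕ,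
      (s : ℝ) * w - 2 * wq ≤ α i + 4 * wq * ((j : ℕ) : ℝ) ∧
      α i + 4 * wq * ((j : ℕ) : ℝ) ≤ (s : ℝ) * w + wq := by
    intro j
    refine hcon (j : ℕ) ?_
    have hj : (j : ℕ) ≤ 2 * m := by omega
    calc ((j : ℕ) : ℝ) ≤ ((2 * m : ℕ) : ℝ) := by exact_mod_cast hj
    _ = 2 * (m : ℝ) := by push_cast; ring
  choose I S h1 h2 using hsel
  have hcard : Fintype.card (ι × Bool) < Fintype.card (Fin (2 * m + 1)) := by
    simp [hm]
    omega
  obtain ⟨j, j', hne, heq⟩ := Fintype.exists_ne_map_eq_of_card_lt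
    (fun j => ((I j, decide ((S j : ℝ) * w ≤ α (I j) + 4 * (m : ℝ) * wq)) : ι × Bool)) hcard
  have hI : I j = I j' := congrArg Prod.fst heq
  have hBdec := congrArg Prod.snd heq
  simp only at hBdec
  have hB : ((S j : ℝ) * w ≤ α (I j) + 4 * (m : ℝ) * wq) ↔
      ((S j' : ℝ) * w ≤ α (I j') + 4 * (m : ℝ) * wq) := decide_eq_decide.mp hBdec
  rw [hI] at hB
  -- bounds on j, j'
  have hjb : ((j : ℕ) : ℝ) ≤ 2 * (m : ℝ) := by
    have : (j : ℕ) ≤ 2 * m := by omega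
    calc ((j : ℕ) : ℝ) ≤ ((2 * m : ℕ) : ℝ) := by exact_mod_cast this
    _ = 2 * (m : ℝ) := by push_cast; ring
  have hjb' : ((j' : ℕ) : ℝ) ≤ 2 * (m : ℝ) := by
    have : (j' : ℕ) ≤ 2 * m := by omega
    calc ((j' : ℕ) : ℝ) ≤ ((2 * m : ℕ) : ℝ) := by exact_mod_cast this
    _ = 2 * (m : ℝ) := by push_cast; ring
  have h1j := h1 j; have h2j := h2 j
  have h1j' := h1 j'; have h2j' := h2 j'
  rw [hI] at h1j h2j
  -- now both about α (I j')
  have hm1' : (1 : ℝ) ≤ (m : ℝ) := by exact_mod_cast hm1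
  have hSS : S j = S j' := by
    apply nat_eq_of_mul_close hw
    rw [abs_sub_lt_iff]
    by_cases hP : (S j : ℝ) * w ≤ α (I j') + 4 * (m : ℝ) * wq
    · have hP' := hB.mp hP
      constructor <;> nlinarith [(j : ℕ).cast_nonneg (α := ℝ), (j' : ℕ).cast_nonneg (α := ℝ)]
    · have hP' : ¬((S j' : ℝ) * w ≤ α (I j') + 4 * (m : ℝ) * wq) := fun h => hP (hB.mpr h)
      push_neg at hP hP'
      constructor <;> nlinarith [(j : ℕ).cast_nonneg (α := ℝ), (j' : ℕ).cast_nonneg (α := ℝ)]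
  rw [hSS] at h1j h2j
  have hjj : (j : ℕ) = (j' : ℕ) := by
    have habs1 : ((j : ℕ) : ℝ) - ((j' : ℕ) : ℝ) < 1 := by
      by_contra hc; push_neg at hc
      nlinarith
    have habs2 : ((j' : ℕ) : ℝ) - ((j : ℕ) : ℝ) < 1 := by
      by_contra hc; push_neg at hc
      nlinarith
    have h3 : (j : ℕ) < (j' : ℕ) + 1 := by
      have hr : ((j : ℕ) : ℝ) < (((j' : ℕ) + 1 : ℕ) : ℝ) := by push_cast; linarith
      exact_mod_cast hr
    have h4 : (j' : ℕ) < (j : ℕ) + 1 := by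
      have hr : ((j' : ℕ) : ℝ) < (((j : ℕ) + 1 : ℕ) : ℝ) := by push_cast; linarith
      exact_mod_cast hr
    omega
  exact hne (Fin.ext hjj)

lemma child_bound (Ur Y pos o s e : ℝ) (hU : 3 ≤ Ur) (hY : 0 < Y) (he : e = -1 ∨ e = 1)
    (h1 : o + s * (2 * (Ur * Y)) + 2 * Y ≤ pos)
    (h2 : pos ≤ o + (s + 1) * (2 * (Ur * Y)) - 2 * Y) :
    |pos - ((o + Ur * (Ur - 1) * Y) + (2 * (s + 1) - Ur) * (Ur * Y) + e * Y)| ≤ (Ur - 1) * Y := by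
  have he1 : -1 ≤ e := by rcases he with h | h <;> simp [h]
  have he2 : e ≤ 1 := by rcases he with h | h <;> simp [h]
  rw [abs_le]
  constructor <;>
    nlinarith [mul_nonneg (by linarith : (0:ℝ) ≤ 1 + e) hY.le,
      mul_nonneg (by linarith : (0:ℝ) ≤ 1 - e) hY.le]

noncomputable def mpR (N k : ℕ) : ℝ := ((N : ℝ))⁻¹ ^ k

noncomputable def mpw (N k : ℕ) : ℝ := 2 * mpR N k / ((N : ℝ) - 1)

noncomputable def mpY (N k : ℕ) : ℝ := (mpR N k / (N : ℝ)) / ((N : ℝ) - 1)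

lemma mpN_pos {N : ℕ} (h : 2 ≤ N) : (0 : ℝ) < (N : ℝ) := by
  have : (2 : ℝ) ≤ (N : ℝ) := by exact_mod_cast h
  linarith

lemma mpN1_pos {N : ℕ} (h : 2 ≤ N) : (0 : ℝ) < (N : ℝ) - 1 := by
  have : (2 : ℝ) ≤ (N : ℝ) := by exact_mod_cast h
  linarith

lemma mpR_pos {N : ℕ} (h : 2 ≤ N) (k : ℕ) : 0 < mpR N k :=
  pow_pos (inv_pos.mpr (mpN_pos h)) k

lemma mpw_pos {N : ℕ} (h : 2 ≤ N) (k : ℕ) : 0 < mpw N k :=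
  div_pos (by linarith [mpR_pos h k]) (mpN1_pos h)

lemma mpY_pos {N : ℕ} (h : 2 ≤ N) (k : ℕ) : 0 < mpY N k :=
  div_pos (div_pos (mpR_pos h k) (mpN_pos h)) (mpN1_pos h)

lemma mpR_succ {N : ℕ} (k : ℕ) : mpR N (k + 1) = mpR N k / (N : ℝ) := by
  rw [mpR, mpR, pow_succ, div_eq_mul_inv]

lemma mpw_eq {N : ℕ} (h : 2 ≤ N) (k : ℕ) :
    2 * ((N : ℝ) * mpY N k) = 2 * mpR N k / ((N : ℝ) - 1) := by
  have h0 := (mpN_pos h).ne'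
  have h1 := (mpN1_pos h).ne'
  rw [mpY]
  field_simp

lemma mpw_def {N : ℕ} (h : 2 ≤ N) (k : ℕ) : mpw N k = 2 * ((N : ℝ) * mpY N k) := by
  rw [mpw_eq h, mpw]

lemma mpw_succ {N : ℕ} (h : 2 ≤ N) (k : ℕ) : mpw N (k + 1) = 2 * mpY N k := by
  rw [mpw, mpR_succ, mpY]
  ring

lemma mpR_eq {N : ℕ} (h : 2 ≤ N) (k : ℕ) :
    mpR N k = (N : ℝ) * ((N : ℝ) - 1) * mpY N k := by
  have h0 := (mpN_pos h).ne'
  have h1 := (mpN1_pos h).ne'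
  rw [mpY]
  field_simp

lemma mpR_succ_eq {N : ℕ} (h : 2 ≤ N) (k : ℕ) :
    mpR N (k + 1) = ((N : ℝ) - 1) * mpY N k := by
  have h0 := (mpN_pos h).ne'
  have h1 := (mpN1_pos h).ne'
  rw [mpR_succ, mpY]
  field_simp

lemma mp_div_eq {N : ℕ} (h : 2 ≤ N) (k : ℕ) (x : ℝ) :
    x / ((N : ℝ) ^ k * ((N : ℝ) - 1)) = x * ((N : ℝ) * mpY N k) := by
  have hN := mpN_pos h
  have hN1 := mpN1_pos h
  have hk : ((N : ℝ)) ^ k ≠ 0 := by positivity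
  rw [mpY, mpR, inv_pow]
  field_simp

lemma mp_div_eq' {N : ℕ} (h : 2 ≤ N) (k : ℕ) (x : ℝ) :
    x / ((N : ℝ) ^ (k + 1) * ((N : ℝ) - 1)) = x * mpY N k := by
  have hN := mpN_pos h
  have hN1 := mpN1_pos h
  have hk : ((N : ℝ)) ^ (k + 1) ≠ 0 := by positivity
  rw [mpY, mpR, inv_pow]
  rw [pow_succ]
  field_simp

lemma axis_step {ι : Type*} [Fintype ι] (m N : ℕ) (hm : Fintype.card ι = m) (hm1 : 1 ≤ m)
    (hN : 8 * m + 2 ≤ N) (R a w wq : ℝ) (hR : 0 < R)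
    (hw : w = 2 * R / ((N : ℝ) - 1)) (hwq : (N : ℝ) * wq = w) (hwq0 : 0 < wq)
    (q c : ι → ℝ)
    (hinv : ∀ i τ, a ≤ τ → τ ≤ a + w → c i - R ≤ q i + τ ∧ q i + τ ≤ c i + R) :
    ∃ A, a ≤ A ∧ A + wq ≤ a + w ∧ ∀ i, ∃ s : ℕ, s + 1 ≤ N - 1 ∧ ∀ τ, A ≤ τ → τ ≤ A + wq →
      (c i - R) + (s : ℝ) * w + wq ≤ q i + τ ∧
      q i + τ ≤ (c i - R) + ((s : ℝ) + 1) * w - wq := by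
  have hN10 : (10 : ℝ) ≤ (N : ℝ) := by exact_mod_cast (by omega : 10 ≤ N)
  have hNR1 : (0 : ℝ) < (N : ℝ) - 1 := by linarith
  have hw0 : 0 < w := by rw [hw]; positivity
  have hmN : 8 * (m : ℝ) + 2 ≤ (N : ℝ) := by exact_mod_cast hN
  have hspan : (8 * (m : ℝ) + 1) * wq ≤ w := by nlinarith
  obtain ⟨j, hj, hgood⟩ := good_select m hm hm1 w wq hwq0 hspan
    (fun i => a + q i - (c i - R))
  have hj0 : (0 : ℝ) ≤ (j : ℝ) := Nat.cast_nonneg j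
  have hAa : a ≤ a + 4 * wq * (j : ℝ) := by nlinarith
  have hAw : (a + 4 * wq * (j : ℝ)) + wq ≤ a + w := by nlinarith
  refine ⟨a + 4 * wq * (j : ℝ), hAa, hAw, ?_⟩
  intro i
  have hβ0 : 0 ≤ (a + q i - (c i - R)) + 4 * wq * (j : ℝ) := by
    have h := (hinv i (a + 4 * wq * (j : ℝ)) hAa (by linarith)).1
    linarith
  have hcast : ((N - 1 : ℕ) : ℝ) = (N : ℝ) - 1 := by
    have : 1 ≤ N := by omega
    push_cast [this]
    ring
  have hβ1 : ((a + q i - (c i - R)) + 4 * wq * (j : ℝ)) + wq ≤ ((N - 1 : ℕ) : ℝ) * w := by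
    have h := (hinv i ((a + 4 * wq * (j : ℝ)) + wq) (by linarith) (by linarith)).2
    have h2 : ((N : ℝ) - 1) * w = 2 * R := by
      rw [hw]
      field_simp
    rw [hcast, h2]
    linarith
  obtain ⟨s, hsK, hc1, hc2⟩ := cell_select (N - 1) w wq
    ((a + q i - (c i - R)) + 4 * wq * (j : ℝ)) hw0 hwq0 hβ0 hβ1 (fun s => hgood i s)
  refine ⟨s, hsK, ?_⟩
  intro τ hτ1 hτ2
  constructor
  · linarith
  · linarith

def mpInv (U V : ℕ) (ctr : List (Fin (U - 1) × Fin (V - 1)) → (Fin 2 → ℝ))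
    (lam : ℝ) (C : Set (Fin 2 → ℝ)) (k : ℕ)
    (ω : C → List (Fin (U - 1) × Fin (V - 1))) (a b : ℝ) : Prop :=
  (∀ i, (ω i).length = k) ∧
  ∀ τ σ, a ≤ τ → τ ≤ a + mpw U k → b ≤ σ → σ ≤ b + mpw V k →
    ∀ i : C, |lam * (i : Fin 2 → ℝ) 0 + τ - ctr (ω i) 0| ≤ mpR U k ∧
             |lam * (i : Fin 2 → ℝ) 1 + σ - ctr (ω i) 1| ≤ mpR V k

lemma mpStep (U V : ℕ)
    (corner : List (Fin (U - 1) × Fin (V - 1)) → (Fin (U - 1) × Fin (V - 1)) → Bool × Bool)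
    (ctr : List (Fin (U - 1) × Fin (V - 1)) → (Fin 2 → ℝ))
    (hrec : ∀ (ω : List (Fin (U - 1) × Fin (V - 1))) (i : Fin (U - 1) × Fin (V - 1)),
      (ctr (ω ++ [i]) 0 =
        ctr ω 0 + (2 * ((i.1 : ℕ) + 1 : ℝ) - U) / ((U : ℝ) ^ ω.length * ((U : ℝ) - 1))
          + (if (corner ω i).1 then (-1 : ℝ) else 1) /
              ((U : ℝ) ^ (ω.length + 1) * ((U : ℝ) - 1))) ∧
      (ctr (ω ++ [i]) 1 =
        ctr ω 1 + (2 * ((i.2 : ℕ) + 1 : ℝ) - V) / ((V : ℝ) ^ ω.length * ((V : ℝ) - 1))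
          + (if (corner ω i).2 then (-1 : ℝ) else 1) /
              ((V : ℝ) ^ (ω.length + 1) * ((V : ℝ) - 1))))
    (lam : ℝ) (C : Set (Fin 2 → ℝ)) [Fintype C] (m : ℕ)
    (hm : Fintype.card C = m) (hm1 : 1 ≤ m) (hUm : 8 * m + 2 ≤ U) (hVm : 8 * m + 2 ≤ V)
    (k : ℕ) (ω : C → List (Fin (U - 1) × Fin (V - 1))) (a b : ℝ)
    (h : mpInv U V ctr lam C k ω a b) :
    ∃ ω' a' b', mpInv U V ctr lam C (k + 1) ω' a' b' ∧
      a ≤ a' ∧ a' + mpw U (k + 1) ≤ a + mpw U k ∧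
      b ≤ b' ∧ b' + mpw V (k + 1) ≤ b + mpw V k := by
  obtain ⟨hlen, hpos⟩ := h
  have hU2 : 2 ≤ U := by omega
  have hV2 : 2 ≤ V := by omega
  have hU3 : (3 : ℝ) ≤ (U : ℝ) := by exact_mod_cast (by omega : 3 ≤ U)
  have hV3 : (3 : ℝ) ≤ (V : ℝ) := by exact_mod_cast (by omega : 3 ≤ V)
  -- x axis
  obtain ⟨A, hA1, hA2, hAs⟩ := axis_step m U hm hm1 hUm (mpR U k) a
    (2 * ((U : ℝ) * mpY U k)) (2 * mpY U k) (mpR_pos hU2 k) (mpw_eq hU2 k) (by ring)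
    (by have := mpY_pos hU2 k; linarith)
    (fun i : C => lam * (i : Fin 2 → ℝ) 0) (fun i : C => ctr (ω i) 0)
    (by
      intro i τ h1 h2
      have h2' : τ ≤ a + mpw U k := by rw [mpw_def hU2 k]; exact h2
      have hb := (hpos τ b h1 h2' le_rfl (by linarith [mpw_pos hV2 k]) i).1
      have hb2 := abs_le.mp hb
      constructor <;> [linarith [hb2.1]; linarith [hb2.2]])
  -- y axis
  obtain ⟨B, hB1, hB2, hBs⟩ := axis_step m V hm hm1 hVm (mpR V k) b
    (2 * ((V : ℝ) * mpY V k)) (2 * mpY V k) (mpR_pos hV2 k) (mpw_eq hV2 k) (by ring)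
    (by have := mpY_pos hV2 k; linarith)
    (fun i : C => lam * (i : Fin 2 → ℝ) 1) (fun i : C => ctr (ω i) 1)
    (by
      intro i σ h1 h2
      have h2' : σ ≤ b + mpw V k := by rw [mpw_def hV2 k]; exact h2
      have hb := (hpos a σ le_rfl (by linarith [mpw_pos hU2 k]) h1 h2' i).2
      have hb2 := abs_le.mp hb
      constructor <;> [linarith [hb2.1]; linarith [hb2.2]])
  choose s hs1 hs2 using hAs
  choose t ht1 ht2 using hBs
  have hslt : ∀ i, s i < U - 1 := fun i => by have := hs1 i; omega
  have htlt : ∀ i, t i < V - 1 := fun i => by have := ht1 i; omega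
  refine ⟨fun i => ω i ++ [(⟨s i, hslt i⟩, ⟨t i, htlt i⟩)], A, B, ⟨?_, ?_⟩, hA1, ?_, hB1, ?_⟩
  · intro i
    rw [List.length_append, hlen i]
    rfl
  · -- position invariant at level k+1
    intro τ σ hτ1 hτ2 hσ1 hσ2 i
    have hτ2' : τ ≤ A + 2 * mpY U k := by rw [mpw_succ hU2 k] at hτ2; exact hτ2
    have hσ2' : σ ≤ B + 2 * mpY V k := by rw [mpw_succ hV2 k] at hσ2; exact hσ2
    have hx := hs2 i τ hτ1 hτ2'
    have hy := ht2 i σ hσ1 hσ2'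
    have hrx := (hrec (ω i) (⟨s i, hslt i⟩, ⟨t i, htlt i⟩)).1
    have hry := (hrec (ω i) (⟨s i, hslt i⟩, ⟨t i, htlt i⟩)).2
    rw [hlen i] at hrx hry
    have hRe := mpR_eq hU2 k
    have hRe' := mpR_eq hV2 k
    constructor
    · -- x coordinate
      rw [mpR_succ_eq hU2 k]
      cases hcor : (corner (ω i) (⟨s i, hslt i⟩, ⟨t i, htlt i⟩)).1 with
      | false =>
        have hr2 : ctr (ω i ++ [(⟨s i, hslt i⟩, ⟨t i, htlt i⟩)]) 0 =
            ctr (ω i) 0 + (2 * ((s i : ℝ) + 1) - (U : ℝ)) * ((U : ℝ) * mpY U k)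
              + (1 : ℝ) * mpY U k := by
          rw [hrx, hcor, mp_div_eq hU2 k, mp_div_eq' hU2 k]
          simp only [Fin.val_mk, Bool.false_eq_true, if_false]
          try push_cast
          try ring
        have hcb := child_bound (U : ℝ) (mpY U k) (lam * (i : Fin 2 → ℝ) 0 + τ)
          (ctr (ω i) 0 - mpR U k) ((s i : ℝ)) 1 hU3 (mpY_pos hU2 k) (Or.inr rfl) hx.1 hx.2
        have hcb2 := abs_le.mp hcb
        rw [hr2, abs_le]
        constructor <;> [linarith [hcb2.1]; linarith [hcb2.2]]
      | true =>
        have hr2 : ctr (ω i ++ [(⟨s i, hslt i⟩, ⟨t i, htlt i⟩)]) 0 =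
            ctr (ω i) 0 + (2 * ((s i : ℝ) + 1) - (U : ℝ)) * ((U : ℝ) * mpY U k)
              + (-1 : ℝ) * mpY U k := by
          rw [hrx, hcor, mp_div_eq hU2 k, mp_div_eq' hU2 k]
          simp only [Fin.val_mk, if_true]
          try push_cast
          try ring
        have hcb := child_bound (U : ℝ) (mpY U k) (lam * (i : Fin 2 → ℝ) 0 + τ)
          (ctr (ω i) 0 - mpR U k) ((s i : ℝ)) (-1) hU3 (mpY_pos hU2 k) (Or.inl rfl) hx.1 hx.2
        have hcb2 := abs_le.mp hcb
        rw [hr2, abs_le]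
        constructor <;> [linarith [hcb2.1]; linarith [hcb2.2]]
    · -- y coordinate
      rw [mpR_succ_eq hV2 k]
      cases hcor : (corner (ω i) (⟨s i, hslt i⟩, ⟨t i, htlt i⟩)).2 with
      | false =>
        have hr2 : ctr (ω i ++ [(⟨s i, hslt i⟩, ⟨t i, htlt i⟩)]) 1 =
            ctr (ω i) 1 + (2 * ((t i : ℝ) + 1) - (V : ℝ)) * ((V : ℝ) * mpY V k)
              + (1 : ℝ) * mpY V k := by
          rw [hry, hcor, mp_div_eq hV2 k, mp_div_eq' hV2 k]
          simp only [Fin.val_mk, Bool.false_eq_true, if_false]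
          try push_cast
          try ring
        have hcb := child_bound (V : ℝ) (mpY V k) (lam * (i : Fin 2 → ℝ) 1 + σ)
          (ctr (ω i) 1 - mpR V k) ((t i : ℝ)) 1 hV3 (mpY_pos hV2 k) (Or.inr rfl) hy.1 hy.2
        have hcb2 := abs_le.mp hcb
        rw [hr2, abs_le]
        constructor <;> [linarith [hcb2.1]; linarith [hcb2.2]]
      | true =>
        have hr2 : ctr (ω i ++ [(⟨s i, hslt i⟩, ⟨t i, htlt i⟩)]) 1 =
            ctr (ω i) 1 + (2 * ((t i : ℝ) + 1) - (V : ℝ)) * ((V : ℝ) * mpY V k)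
              + (-1 : ℝ) * mpY V k := by
          rw [hry, hcor, mp_div_eq hV2 k, mp_div_eq' hV2 k]
          simp only [Fin.val_mk, if_true]
          try push_cast
          try ring
        have hcb := child_bound (V : ℝ) (mpY V k) (lam * (i : Fin 2 → ℝ) 1 + σ)
          (ctr (ω i) 1 - mpR V k) ((t i : ℝ)) (-1) hV3 (mpY_pos hV2 k) (Or.inl rfl) hy.1 hy.2
        have hcb2 := abs_le.mp hcb
        rw [hr2, abs_le]
        constructor <;> [linarith [hcb2.1]; linarith [hcb2.2]]
  · rw [mpw_succ hU2 k, mpw_def hU2 k]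
    exact hA2
  · rw [mpw_succ hV2 k, mpw_def hV2 k]
    exact hB2

end MoranAux

/-- **Patterns in Moran self-affine sets.**  Let `M ∈ ℕ` and `ℓ ∈ ℕ`.  There exists `U ≥ 2`
such that every `F ∈ 𝒞𝒟(U, U + ℓ)` contains a homothetic copy of every set with at most `M`
elements: for every non-empty finite `C ⊆ ℝ²` with at most `M` elements there exist `λ > 0` and
`x ∈ ℝ²` with `λC + x ⊆ F`. -/
theorem moran_patterns (M : ℕ) (hM : 0 < M) (ℓ : ℕ) :
    ∃ U : ℕ, 2 ≤ U ∧ ∀ F : Set (Fin 2 → ℝ), RCD U (U + ℓ) F →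
      ∀ C : Set (Fin 2 → ℝ), C.Finite → C.Nonempty → C.ncard ≤ M →
        ∃ lam : ℝ, 0 < lam ∧ ∃ x : Fin 2 → ℝ, (fun b => lam • b + x) '' C ⊆ F := by
  refine ⟨10 * M + 10, by omega, ?_⟩
  intro F hF C hCfin hCne hCM
  set U : ℕ := 10 * M + 10 with hUdef
  set V : ℕ := U + ℓ with hVdef
  obtain ⟨corner, ctr, hctr0, hrec, hFeq⟩ := hF
  haveI : Fintype C := hCfin.fintype
  haveI : Nonempty C := hCne.to_subtype
  set m := C.ncard with hmdef
  have hmcard : Fintype.card C = m := by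
    rw [hmdef, Set.ncard_eq_toFinset_card', Set.toFinset_card]
  have hm1 : 1 ≤ m := (Set.ncard_pos hCfin).mpr hCne
  have hmM : m ≤ M := hCM
  have hUm : 8 * m + 2 ≤ U := by omega
  have hVm : 8 * m + 2 ≤ V := by omega
  have hU2 : 2 ≤ U := by omega
  have hV2 : 2 ≤ V := by omega
  -- a uniform bound on the points of C
  obtain ⟨Q, hQ⟩ : ∃ Q : ℝ, ∀ b ∈ C, |b 0| ≤ Q ∧ |b 1| ≤ Q := by
    obtain ⟨Q, hQ⟩ := (hCfin.image (fun b => max |b 0| |b 1|)).bddAbove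
    exact ⟨Q, fun b hb => ⟨le_trans (le_max_left _ _) (hQ ⟨b, hb, rfl⟩),
      le_trans (le_max_right _ _) (hQ ⟨b, hb, rfl⟩)⟩⟩
  have hQ0 : 0 ≤ Q := by
    obtain ⟨b, hb⟩ := hCne
    exact le_trans (abs_nonneg _) (hQ b hb).1
  refine ⟨(2 * (Q + 1))⁻¹, by positivity, ?_⟩
  set lam : ℝ := (2 * (Q + 1))⁻¹ with hlamdef
  have hlam0 : 0 < lam := by rw [hlamdef]; positivity
  have hkey : ∀ z : ℝ, |z| ≤ Q → |lam * z| ≤ 1 / 2 := by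
    intro z hz
    rw [abs_mul, abs_of_pos hlam0, hlamdef]
    have h2 : (0 : ℝ) < 2 * (Q + 1) := by linarith
    rw [inv_mul_le_iff₀ h2]
    linarith
  -- initial invariant
  have hUR1 : (0 : ℝ) < (U : ℝ) - 1 := MoranAux.mpN1_pos hU2
  have hVR1 : (0 : ℝ) < (V : ℝ) - 1 := MoranAux.mpN1_pos hV2
  have hU3 : (3 : ℝ) ≤ (U : ℝ) := by exact_mod_cast (by omega : 3 ≤ U)
  have hV3 : (3 : ℝ) ≤ (V : ℝ) := by exact_mod_cast (by omega : 3 ≤ V)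
  have hInv0 : MoranAux.mpInv U V ctr lam C 0 (fun _ => [])
      (-(1 / ((U : ℝ) - 1))) (-(1 / ((V : ℝ) - 1))) := by
    constructor
    · intro i; rfl
    · intro τ σ hτ1 hτ2 hσ1 hσ2 i
      have hw0 : MoranAux.mpw U 0 = 2 / ((U : ℝ) - 1) := by
        rw [MoranAux.mpw, MoranAux.mpR, pow_zero]
        ring
      have hw0' : MoranAux.mpw V 0 = 2 / ((V : ℝ) - 1) := by
        rw [MoranAux.mpw, MoranAux.mpR, pow_zero]
        ring
      rw [hw0] at hτ2
      rw [hw0'] at hσ2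
      have hsimpU : -(1 / ((U : ℝ) - 1)) + 2 / ((U : ℝ) - 1) = 1 / ((U : ℝ) - 1) := by ring
      have hsimpV : -(1 / ((V : ℝ) - 1)) + 2 / ((V : ℝ) - 1) = 1 / ((V : ℝ) - 1) := by ring
      rw [hsimpU] at hτ2
      rw [hsimpV] at hσ2
      have hU12 : 1 / ((U : ℝ) - 1) ≤ 1 / 2 := by
        apply one_div_le_one_div_of_le <;> linarith
      have hV12 : 1 / ((V : ℝ) - 1) ≤ 1 / 2 := by
        apply one_div_le_one_div_of_le <;> linarith
      have h0x : ctr ([] : List (Fin (U - 1) × Fin (V - 1))) 0 = 0 := by rw [hctr0]; rfl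
      have h0y : ctr ([] : List (Fin (U - 1) × Fin (V - 1))) 1 = 0 := by rw [hctr0]; rfl
      have hz0 := abs_le.mp (hkey _ (hQ (i : Fin 2 → ℝ) i.2).1)
      have hz1 := abs_le.mp (hkey _ (hQ (i : Fin 2 → ℝ) i.2).2)
      have hR0 : MoranAux.mpR U 0 = 1 := pow_zero _
      have hR0' : MoranAux.mpR V 0 = 1 := pow_zero _
      constructor
      · rw [h0x, hR0, abs_le]
        constructor <;> linarith [hτ1, hτ2, hz0.1, hz0.2, hU12]
      · rw [h0y, hR0', abs_le]
        constructor <;> linarith [hσ1, hσ2, hz1.1, hz1.2, hV12]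
  -- the recursive step, packaged on triples
  have hstep' : ∀ (k : ℕ) (d : (C → List (Fin (U - 1) × Fin (V - 1))) × ℝ × ℝ),
      MoranAux.mpInv U V ctr lam C k d.1 d.2.1 d.2.2 →
      ∃ d' : (C → List (Fin (U - 1) × Fin (V - 1))) × ℝ × ℝ,
        MoranAux.mpInv U V ctr lam C (k + 1) d'.1 d'.2.1 d'.2.2 ∧
        d.2.1 ≤ d'.2.1 ∧ d'.2.1 + MoranAux.mpw U (k + 1) ≤ d.2.1 + MoranAux.mpw U k ∧
        d.2.2 ≤ d'.2.2 ∧ d'.2.2 + MoranAux.mpw V (k + 1) ≤ d.2.2 + MoranAux.mpw V k := by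
    intro k d hd
    obtain ⟨ω', a', b', h1, h2, h3, h4, h5⟩ :=
      MoranAux.mpStep U V corner ctr hrec lam C m hmcard hm1 hUm hVm k d.1 d.2.1 d.2.2 hd
    exact ⟨(ω', a', b'), h1, h2, h3, h4, h5⟩
  choose! f hf1 hf2 hf3 hf4 hf5 using hstep'
  set ch : ℕ → (C → List (Fin (U - 1) × Fin (V - 1))) × ℝ × ℝ :=
    fun k => Nat.rec ((fun _ => []), -(1 / ((U : ℝ) - 1)), -(1 / ((V : ℝ) - 1)))
      (fun n ih => f n ih) k with hch
  have hchS : ∀ k, ch (k + 1) = f k (ch k) := fun k => by rw [hch]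
  have hch0 : ch 0 = ((fun _ => []), -(1 / ((U : ℝ) - 1)), -(1 / ((V : ℝ) - 1))) := by
    rw [hch]
    rfl
  have hchInv : ∀ k, MoranAux.mpInv U V ctr lam C k (ch k).1 (ch k).2.1 (ch k).2.2 := by
    intro k
    induction k with
    | zero => rw [hch0]; exact hInv0
    | succ n ihn => rw [hchS n]; exact hf1 n (ch n) ihn
  have hrel : ∀ k, (ch k).2.1 ≤ (ch (k + 1)).2.1 ∧
      (ch (k + 1)).2.1 + MoranAux.mpw U (k + 1) ≤ (ch k).2.1 + MoranAux.mpw U k ∧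
      (ch k).2.2 ≤ (ch (k + 1)).2.2 ∧
      (ch (k + 1)).2.2 + MoranAux.mpw V (k + 1) ≤ (ch k).2.2 + MoranAux.mpw V k := by
    intro k
    rw [hchS k]
    exact ⟨hf2 k _ (hchInv k), hf3 k _ (hchInv k), hf4 k _ (hchInv k), hf5 k _ (hchInv k)⟩
  have hmonoU : ∀ k j, k ≤ j → (ch k).2.1 ≤ (ch j).2.1 ∧
      (ch j).2.1 + MoranAux.mpw U j ≤ (ch k).2.1 + MoranAux.mpw U k := by
    intro k j hkj
    induction j, hkj using Nat.le_induction with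
    | base => exact ⟨le_rfl, le_rfl⟩
    | succ n hn ih =>
      obtain ⟨r1, r2, _, _⟩ := hrel n
      exact ⟨ih.1.trans r1, r2.trans ih.2⟩
  have hmonoV : ∀ k j, k ≤ j → (ch k).2.2 ≤ (ch j).2.2 ∧
      (ch j).2.2 + MoranAux.mpw V j ≤ (ch k).2.2 + MoranAux.mpw V k := by
    intro k j hkj
    induction j, hkj using Nat.le_induction with
    | base => exact ⟨le_rfl, le_rfl⟩
    | succ n hn ih =>
      obtain ⟨_, _, r3, r4⟩ := hrel n
      exact ⟨ih.1.trans r3, r4.trans ih.2⟩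
  have hbddU : BddAbove (Set.range fun k => (ch k).2.1) := by
    refine ⟨(ch 0).2.1 + MoranAux.mpw U 0, ?_⟩
    rintro x ⟨k, rfl⟩
    have h := (hmonoU 0 k (Nat.zero_le k)).2
    have := (MoranAux.mpw_pos hU2 k).le
    simp only
    linarith
  have hbddV : BddAbove (Set.range fun k => (ch k).2.2) := by
    refine ⟨(ch 0).2.2 + MoranAux.mpw V 0, ?_⟩
    rintro x ⟨k, rfl⟩
    have h := (hmonoV 0 k (Nat.zero_le k)).2
    have := (MoranAux.mpw_pos hV2 k).le
    simp only
    linarith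
  set τs := sSup (Set.range fun k => (ch k).2.1) with hτs
  set σs := sSup (Set.range fun k => (ch k).2.2) with hσs
  have hτ1 : ∀ k, (ch k).2.1 ≤ τs := fun k => le_csSup hbddU ⟨k, rfl⟩
  have hσ1 : ∀ k, (ch k).2.2 ≤ σs := fun k => le_csSup hbddV ⟨k, rfl⟩
  have hτ2 : ∀ k, τs ≤ (ch k).2.1 + MoranAux.mpw U k := by
    intro k
    rw [hτs]
    refine csSup_le ⟨(ch 0).2.1, ⟨0, rfl⟩⟩ ?_
    rintro x ⟨j, rfl⟩
    simp only
    rcases le_total k j with h | h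
    · have h2 := (hmonoU k j h).2
      have := (MoranAux.mpw_pos hU2 j).le
      linarith
    · have h2 := (hmonoU j k h).1
      have := (MoranAux.mpw_pos hU2 k).le
      linarith
  have hσ2 : ∀ k, σs ≤ (ch k).2.2 + MoranAux.mpw V k := by
    intro k
    rw [hσs]
    refine csSup_le ⟨(ch 0).2.2, ⟨0, rfl⟩⟩ ?_
    rintro x ⟨j, rfl⟩
    simp only
    rcases le_total k j with h | h
    · have h2 := (hmonoV k j h).2
      have := (MoranAux.mpw_pos hV2 j).le
      linarith
    · have h2 := (hmonoV j k h).1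
      have := (MoranAux.mpw_pos hV2 k).le
      linarith
  refine ⟨![τs, σs], ?_⟩
  rintro y ⟨pt, hpt, rfl⟩
  rw [hFeq, Set.mem_iInter]
  intro k
  simp only [Set.mem_iUnion, Set.mem_setOf_eq, exists_prop]
  refine ⟨(ch k).1 ⟨pt, hpt⟩, (hchInv k).1 ⟨pt, hpt⟩, ?_⟩
  have hmem := (hchInv k).2 τs σs (hτ1 k) (hτ2 k) (hσ1 k) (hσ2 k) ⟨pt, hpt⟩
  simp only [gameBox, Set.mem_setOf_eq]
  rw [Fin.forall_fin_two]
  constructor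
  · have hcoord : (lam • pt + ![τs, σs]) 0 = lam * pt 0 + τs := by
      simp [Matrix.cons_val_zero]
    simp only [AUV, Matrix.cons_val_zero, mul_one, Real.rpow_natCast]
    rw [hcoord]
    exact hmem.1
  · have hcoord : (lam • pt + ![τs, σs]) 1 = lam * pt 1 + σs := by
      simp [Matrix.cons_val_one]
    simp only [AUV, Matrix.cons_val_one, Matrix.head_cons, mul_one, Real.rpow_natCast]
    rw [hcoord]
    exact hmem.2
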